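/- If m(z) = [[u, u'],[v, v']] where u,v satisfy the Fuchs equation with transformation-invariant T, and η_γ is the factor of automorphy, then m(γ(z))·η_γ(z) = χ·m(z) where χ is the (constant) monodromy matrix of (u,v) for γ. -/

import Mathlib

/-!
Differentiating the monodromy relation `(c t + d) f(γ t) = p u(t) + q v(t)` at `z`, with
`γ'(z) = (c z + d)⁻²` because `a d - b c = 1`, gives
`c f(γ z) + (c z + d)⁻¹ f'(γ z) = p u'(z) + q v'(z)`.
Applied to `f = u` and `f = v`, this gives the second column of `m(γ z) η_γ(z) = χ m(z)`;
the first column is the monodromy relation itself.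
-/

open Filter Topology

section Mobius

variable {𝕜 : Type*} [NontriviallyNormedField 𝕜] {a b c d z : 𝕜}

theorem hasDerivAt_mul_add (c d z : 𝕜) : HasDerivAt (fun w => c * w + d) c z := by
  simpa using ((hasDerivAt_id z).const_mul c).add_const d

theorem hasDerivAt_mobius (hz : c * z + d ≠ 0) :
    HasDerivAt (fun w => (a * w + b) / (c * w + d)) ((a * d - b * c) / (c * z + d) ^ 2) z :=
  ((hasDerivAt_mul_add a b z).fun_div (hasDerivAt_mul_add c d z) hz).congr_deriv (by ring)

theorem hasDerivAt_mul_comp_mobius {f : 𝕜 → 𝕜} (had : a * d - b * c = 1)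
    (hz : c * z + d ≠ 0) (hf : DifferentiableAt 𝕜 f ((a * z + b) / (c * z + d))) :
    HasDerivAt (fun t => (c * t + d) * f ((a * t + b) / (c * t + d)))
      (c * f ((a * z + b) / (c * z + d)) +
        deriv f ((a * z + b) / (c * z + d)) * (c * z + d)⁻¹) z := by
  have hcomp := hf.hasDerivAt.comp z (hasDerivAt_mobius (a := a) (b := b) hz)
  refine ((hasDerivAt_mul_add c d z).mul hcomp).congr_deriv ?_
  rw [had, Function.comp_apply]
  field_simp

theorem hasDerivAt_mul_comp_mobius_unique {f g : 𝕜 → 𝕜} {g' : 𝕜}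
    (hg : HasDerivAt g g' z) (had : a * d - b * c = 1)
    (hz : c * z + d ≠ 0) (hf : DifferentiableAt 𝕜 f ((a * z + b) / (c * z + d)))
    (hrel : ∀ᶠ t in 𝓝 z, (c * t + d) * f ((a * t + b) / (c * t + d)) = g t) :
    c * f ((a * z + b) / (c * z + d)) + deriv f ((a * z + b) / (c * z + d)) * (c * z + d)⁻¹ =
      g' :=
  ((hasDerivAt_mul_comp_mobius had hz hf).congr_of_eventuallyEq
    (hrel.mono fun _ ht => ht.symm)).unique hg

end Mobius

theorem m_transforms_with_monodromy_general
    (U : Set ℂ) (hU : IsOpen U) (a b c d : ℂ) (had : a * d - b * c = 1)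
    (u v : ℂ → ℂ) (χ : Matrix (Fin 2) (Fin 2) ℂ)
    (hmaps : ∀ z ∈ U, (a * z + b) / (c * z + d) ∈ U)
    (hden : ∀ z ∈ U, c * z + d ≠ 0)
    (hu1 : DifferentiableOn ℂ u U) (hv1 : DifferentiableOn ℂ v U)
    (hχ : ∀ z ∈ U,
      (c * z + d) * u ((a * z + b) / (c * z + d)) = χ 0 0 * u z + χ 0 1 * v z ∧
      (c * z + d) * v ((a * z + b) / (c * z + d)) = χ 1 0 * u z + χ 1 1 * v z) :
    ∀ z ∈ U,
      (!![u ((a * z + b) / (c * z + d)), deriv u ((a * z + b) / (c * z + d));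
          v ((a * z + b) / (c * z + d)), deriv v ((a * z + b) / (c * z + d))] :
        Matrix (Fin 2) (Fin 2) ℂ) *
        !![c * z + d, c; 0, (c * z + d)⁻¹] =
      χ * !![u z, deriv u z; v z, deriv v z] := by
  intro z hz
  have hderiv {f : ℂ → ℂ} (hf : DifferentiableOn ℂ f U) {w : ℂ} (hw : w ∈ U) :
      HasDerivAt f (deriv f w) w :=
    (hf.differentiableAt (hU.mem_nhds hw)).hasDerivAt
  have hnear : ∀ᶠ t in 𝓝 z, t ∈ U := hU.mem_nhds hz
  have hlin (p q : ℂ) : HasDerivAt (fun t => p * u t + q * v t)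
      (p * deriv u z + q * deriv v z) z :=
    ((hderiv hu1 hz).const_mul p).add ((hderiv hv1 hz).const_mul q)
  have du := hasDerivAt_mul_comp_mobius_unique (hlin (χ 0 0) (χ 0 1)) had (hden z hz)
    (hderiv hu1 (hmaps z hz)).differentiableAt (hnear.mono fun t ht => (hχ t ht).1)
  have dv := hasDerivAt_mul_comp_mobius_unique (hlin (χ 1 0) (χ 1 1)) had (hden z hz)
    (hderiv hv1 (hmaps z hz)).differentiableAt (hnear.mono fun t ht => (hχ t ht).2)
  rw [Matrix.eta_fin_two χ, Matrix.mul_fin_two, Matrix.mul_fin_two]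
  ext i j
  fin_cases i <;> fin_cases j <;>
    simp only [Fin.zero_eta, Fin.mk_one, Matrix.of_apply, Matrix.cons_val_zero,
      Matrix.cons_val_one, Matrix.cons_val_fin_one]
  · linear_combination (hχ z hz).1
  · linear_combination du
  · linear_combination (hχ z hz).2
  · linear_combination dv

/-- If `m(z) = [[u, u'],[v, v']]` where `u, v` solve the Fuchs equation with a
transformation-invariant `T`, `η_γ(z) = [[cz+d, c],[0,(cz+d)⁻¹]]` is the factor of
automorphy for `γ(z) = (az+b)/(cz+d)`, `ad-bc = 1`, and `χ` is the constant monodromy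
matrix with `(cz+d)·(u(γz), v(γz))ᵀ = χ·(u(z), v(z))ᵀ`, then
`m(γ(z))·η_γ(z) = χ·m(z)`. -/
theorem m_transforms_with_monodromy
    (U : Set ℂ) (hU : IsOpen U) (a b c d : ℂ) (had : a * d - b * c = 1)
    (T u v : ℂ → ℂ) (χ : Matrix (Fin 2) (Fin 2) ℂ)
    (hmaps : ∀ z ∈ U, (a * z + b) / (c * z + d) ∈ U)
    (hden : ∀ z ∈ U, c * z + d ≠ 0)
    (hu1 : DifferentiableOn ℂ u U) (hv1 : DifferentiableOn ℂ v U)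
    (hu : ∀ z ∈ U, deriv (deriv u) z + (1 / 2) * T z * u z = 0)
    (hv : ∀ z ∈ U, deriv (deriv v) z + (1 / 2) * T z * v z = 0)
    (hW : ∀ z ∈ U, u z * deriv v z - deriv u z * v z = 1)
    (hTtr : ∀ z ∈ U,
      T ((a * z + b) / (c * z + d)) *
        (deriv (fun w => (a * w + b) / (c * w + d)) z) ^ 2 = T z)
    (hχ : ∀ z ∈ U,
      (c * z + d) * u ((a * z + b) / (c * z + d)) = χ 0 0 * u z + χ 0 1 * v z ∧
      (c * z + d) * v ((a * z + b) / (c * z + d)) = χ 1 0 * u z + χ 1 1 * v z) :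
    ∀ z ∈ U,
      (!![u ((a * z + b) / (c * z + d)), deriv u ((a * z + b) / (c * z + d));
          v ((a * z + b) / (c * z + d)), deriv v ((a * z + b) / (c * z + d))] :
        Matrix (Fin 2) (Fin 2) ℂ) *
        !![c * z + d, c; 0, (c * z + d)⁻¹] =
      χ * !![u z, deriv u z; v z, deriv v z] :=
  m_transforms_with_monodromy_general U hU a b c d had u v χ hmaps hden hu1 hv1 hχ
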